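/- arXiv:2408.04143 — 3 statements merged into one kernel-verified Lean document; each statement's English description precedes it below -/
import Mathlib

section
/- Let x₀ > 1, α > 0, and suppose there are constants C₁, C₂ > 0 such that for all x ≥ x₀ one has |∑_{n ≤ √x} μ(n)/n| ≤ C₁/(log x)^α and ∑_{n ≤ √x} |μ(n)|/n ≤ C₂ · log x. Then for all x ≥ x₀, |m₂(x)| ≤ 2^{α+1}·C₁·C₂/(log x)^{α−1} + 2^{2α}·C₁²/(log x)^{2α}. -/
open Finset ArithmeticFunction Real

/-!
Dirichlet's hyperbola method, cut at `√x`, gives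
`m₂ x = 2 ∑_{d ≤ √x} μ(d)/d · m(x/d) - m(√x)²` with `m y = ∑_{n ≤ y} μ(n)/n`.
For `d ≤ √x` we have `x/d = √y` with `y = (x/d)² ≥ x`, so every `m(x/d)` obeys the same
bound `C₁ / (log x)^α` as `m(√x)`; the sum is then at most `C₂ log x · C₁ / (log x)^α`.
-/

/-- `m₂ x = ∑_{n ≤ x} (μ∗μ)(n)/n`, with `μ∗μ` the Dirichlet convolution of the Möbius
function with itself. -/
noncomputable def m₂ (x : ℝ) : ℝ :=
  ∑ n ∈ Finset.Icc 1 ⌊x⌋₊, ((moebius * moebius) n : ℝ) / n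

namespace ArithmeticFunction

def hyperbolaPairs (N : ℕ) : Finset (ℕ × ℕ) := {p ∈ Ioc 0 N ×ˢ Ioc 0 N | p.1 * p.2 ≤ N}

theorem mem_hyperbolaPairs {N : ℕ} {p : ℕ × ℕ} :
    p ∈ hyperbolaPairs N ↔ 0 < p.1 ∧ 0 < p.2 ∧ p.1 * p.2 ≤ N := by
  obtain ⟨a, b⟩ := p
  simp only [hyperbolaPairs, mem_filter, mem_product, mem_Ioc]
  constructor
  · rintro ⟨⟨⟨ha, -⟩, hb, -⟩, h⟩
    exact ⟨ha, hb, h⟩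
  · rintro ⟨ha, hb, h⟩
    exact ⟨⟨⟨ha, (Nat.le_mul_of_pos_right a hb).trans h⟩, hb,
      (Nat.le_mul_of_pos_left b ha).trans h⟩, h⟩

variable {M : Type*} [AddCommMonoid M]

theorem sum_hyperbolaPairs_fst_le (F : ℕ × ℕ → M) (N s : ℕ) :
    ∑ p ∈ hyperbolaPairs N with p.1 ≤ s, F p =
      ∑ a ∈ Ioc 0 s, ∑ b ∈ Ioc 0 (N / a), F (a, b) := by
  refine sum_finset_product _ _ _ fun ⟨a, b⟩ => ?_
  simp only [mem_filter, mem_hyperbolaPairs, mem_Ioc]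
  by_cases ha : 0 < a
  · rw [Nat.le_div_iff_mul_le ha, mul_comm b]
    tauto
  · simp [ha]

theorem sum_hyperbolaPairs_snd_le (F : ℕ × ℕ → M) (N s : ℕ) :
    ∑ p ∈ hyperbolaPairs N with p.2 ≤ s, F p =
      ∑ b ∈ Ioc 0 s, ∑ a ∈ Ioc 0 (N / b), F (a, b) := by
  refine sum_finset_product_right _ _ _ fun ⟨a, b⟩ => ?_
  simp only [mem_filter, mem_hyperbolaPairs, mem_Ioc]
  by_cases hb : 0 < b
  · rw [Nat.le_div_iff_mul_le hb]
    tauto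
  · simp [hb]

theorem filter_fst_le_union_filter_snd_le_hyperbolaPairs (N : ℕ) :
    {p ∈ hyperbolaPairs N | p.1 ≤ N.sqrt} ∪ {p ∈ hyperbolaPairs N | p.2 ≤ N.sqrt} =
      hyperbolaPairs N := by
  rw [← filter_or, filter_true_of_mem]
  intro p hp
  by_contra! h
  have : (N.sqrt + 1) * (N.sqrt + 1) ≤ p.1 * p.2 := Nat.mul_le_mul h.1 h.2
  exact (Nat.lt_succ_sqrt N).not_ge (this.trans (mem_hyperbolaPairs.1 hp).2.2)

theorem filter_fst_le_inter_filter_snd_le_hyperbolaPairs (N : ℕ) :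
    {p ∈ hyperbolaPairs N | p.1 ≤ N.sqrt} ∩ {p ∈ hyperbolaPairs N | p.2 ≤ N.sqrt} =
      Ioc 0 N.sqrt ×ˢ Ioc 0 N.sqrt := by
  ext ⟨a, b⟩
  simp only [mem_inter, mem_filter, mem_product, mem_Ioc, mem_hyperbolaPairs]
  have : a ≤ N.sqrt → b ≤ N.sqrt → a * b ≤ N := fun ha hb =>
    (Nat.mul_le_mul ha hb).trans (Nat.sqrt_le N)
  tauto

theorem sum_Ioc_mul_eq_hyperbola {R : Type*} [Ring R] (f g : ArithmeticFunction R) (N : ℕ) :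
    ∑ n ∈ Ioc 0 N, (f * g) n =
      ∑ a ∈ Ioc 0 N.sqrt, f a * ∑ b ∈ Ioc 0 (N / a), g b +
        ∑ b ∈ Ioc 0 N.sqrt, (∑ a ∈ Ioc 0 (N / b), f a) * g b -
          (∑ a ∈ Ioc 0 N.sqrt, f a) * ∑ b ∈ Ioc 0 N.sqrt, g b := by
  have left := sum_hyperbolaPairs_fst_le (fun p => f p.1 * g p.2) N N.sqrt
  have right := sum_hyperbolaPairs_snd_le (fun p => f p.1 * g p.2) N N.sqrt
  simp only [← mul_sum] at left
  simp only [← sum_mul] at right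
  rw [sum_Ioc_mul_eq_sum_prod_filter]
  change ∑ p ∈ hyperbolaPairs N, f p.1 * g p.2 = _
  rw [← left, ← right, ← sum_union_inter, filter_fst_le_union_filter_snd_le_hyperbolaPairs,
    filter_fst_le_inter_filter_snd_le_hyperbolaPairs, sum_product, sum_mul_sum,
    add_sub_cancel_right]

theorem mul_pdiv_of_map_mul {R : Type*} [Semifield R] (f g h : ArithmeticFunction R)
    (hh : ∀ a b, h (a * b) = h a * h b) : (f * g).pdiv h = f.pdiv h * g.pdiv h := by
  ext n
  simp only [pdiv_apply, mul_apply, sum_div]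
  refine sum_congr rfl fun p hp => ?_
  rw [← (Nat.mem_divisorsAntidiagonal.1 hp).1, hh, mul_div_mul_comm]

end ArithmeticFunction

theorem Nat.floor_sqrt_eq_sqrt_floor (x : ℝ) : ⌊√x⌋₊ = Nat.sqrt ⌊x⌋₊ := by
  rcases lt_or_ge x 0 with hx | hx
  · simp [sqrt_eq_zero'.2 hx.le, Nat.floor_of_nonpos hx.le]
  rw [Nat.eq_sqrt]
  have hs := Nat.floor_le (sqrt_nonneg x)
  have hs' := Nat.lt_floor_add_one (√x)
  constructor
  · apply Nat.le_floor
    push_cast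
    nlinarith [mul_self_sqrt hx]
  · rw [Nat.floor_lt hx]
    push_cast
    nlinarith [mul_self_sqrt hx, sqrt_nonneg x]

noncomputable def m (y : ℝ) : ℝ := ∑ n ∈ Icc 1 ⌊y⌋₊, (moebius n : ℝ) / n

theorem m₂_eq_hyperbola (x : ℝ) :
    m₂ x = 2 * ∑ d ∈ Icc 1 ⌊√x⌋₊, (moebius d : ℝ) / d * m (x / d) - m √x ^ 2 := by
  set μ' : ArithmeticFunction ℝ := pdiv ↑moebius ↑ArithmeticFunction.id
  have hμ' (n : ℕ) : μ' n = (moebius n : ℝ) / n := by simp [μ', pdiv_apply]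
  have hm₂ : m₂ x = ∑ n ∈ Ioc 0 ⌊x⌋₊, (μ' * μ') n := by
    rw [← mul_pdiv_of_map_mul _ _ _ (fun a b => by simp), m₂,
      ← Icc_add_one_left_eq_Ioc]
    simp [pdiv_apply]
  rw [hm₂, sum_Ioc_mul_eq_hyperbola, ← Nat.floor_sqrt_eq_sqrt_floor]
  simp only [← Icc_add_one_left_eq_Ioc, zero_add, ← Nat.floor_div_natCast, hμ',
    ← m.eq_1, mul_comm (m _)]
  ring

theorem abs_apply_div_le_of_abs_apply_sqrt_le {M : ℝ → ℝ} {x₀ α C x d : ℝ}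
    (hα : 0 ≤ α) (hC : 0 ≤ C) (hM : ∀ y, x₀ ≤ y → |M √y| ≤ C / log y ^ α) (hx₀ : 1 < x₀)
    (hx : x₀ ≤ x) (hd : 0 < d) (hdx : d ≤ √x) : |M (x / d)| ≤ C / log x ^ α := by
  have hx0 : 0 ≤ x := by linarith
  have hxd : √x ≤ x / d := by
    rw [le_div_iff₀ hd]
    calc √x * d ≤ √x * √x := by gcongr
      _ = x := mul_self_sqrt hx0
  have hx_le : x ≤ (x / d) ^ 2 := by
    nlinarith [sq_sqrt hx0, sqrt_nonneg x]
  have hlog : 0 < log x := log_pos (by linarith)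
  have hb := hM _ (hx.trans hx_le)
  rw [sqrt_sq (by positivity)] at hb
  refine hb.trans (div_le_div_of_nonneg_left hC (by positivity) ?_)
  exact rpow_le_rpow hlog.le (log_le_log (by linarith) hx_le) hα

theorem abs_sum_mul_le {ι : Type*} (s : Finset ι) (a b : ι → ℝ) {B : ℝ}
    (hb : ∀ i ∈ s, |b i| ≤ B) : |∑ i ∈ s, a i * b i| ≤ (∑ i ∈ s, |a i|) * B := by
  calc |∑ i ∈ s, a i * b i| ≤ ∑ i ∈ s, |a i| * |b i| := by
        simpa only [abs_mul] using abs_sum_le_sum_abs (fun i => a i * b i) s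
    _ ≤ ∑ i ∈ s, |a i| * B := sum_le_sum fun i hi => by gcongr; exact hb i hi
    _ = (∑ i ∈ s, |a i|) * B := (sum_mul _ _ _).symm

theorem m₂_bound_of_m_bounds_general (x₀ α C₁ C₂ : ℝ) (hx₀ : 1 < x₀) (hα : 0 < α)
    (hC₁ : 0 < C₁)
    (h₁ : ∀ x : ℝ, x₀ ≤ x →
      |∑ n ∈ Finset.Icc 1 ⌊Real.sqrt x⌋₊, (moebius n : ℝ) / n| ≤ C₁ / Real.log x ^ α)
    (h₂ : ∀ x : ℝ, x₀ ≤ x →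
      ∑ n ∈ Finset.Icc 1 ⌊Real.sqrt x⌋₊, |(moebius n : ℝ)| / n ≤ C₂ * Real.log x) :
    ∀ x : ℝ, x₀ ≤ x →
      |m₂ x| ≤ (2 : ℝ) ^ (α + 1) * C₁ * C₂ / Real.log x ^ (α - 1) +
        (2 : ℝ) ^ (2 * α) * C₁ ^ 2 / Real.log x ^ (2 * α) := by
  intro x hx
  have hL : 0 < log x := log_pos (hx₀.trans_le hx)
  set B := C₁ / log x ^ α
  have hm_sqrt : |m √x| ≤ B := h₁ x hx
  have hT : |∑ d ∈ Icc 1 ⌊√x⌋₊, (moebius d : ℝ) / d * m (x / d)| ≤ C₂ * log x * B := by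
    calc _ ≤ (∑ d ∈ Icc 1 ⌊√x⌋₊, |(moebius d : ℝ) / d|) * B :=
          abs_sum_mul_le _ _ _ fun d hd => ?_
      _ ≤ C₂ * log x * B := ?_
    · obtain ⟨hd1, hds⟩ := mem_Icc.1 hd
      exact abs_apply_div_le_of_abs_apply_sqrt_le hα.le hC₁.le h₁ hx₀ hx
        (by exact_mod_cast hd1) ((Nat.cast_le.2 hds).trans (Nat.floor_le (sqrt_nonneg x)))
    · simp only [abs_div, Nat.abs_cast]
      exact mul_le_mul_of_nonneg_right (h₂ x hx) ((abs_nonneg _).trans hm_sqrt)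
  have hm₂ : |m₂ x| ≤ 2 * (C₂ * log x * B) + B ^ 2 := by
    rw [m₂_eq_hyperbola]
    refine (abs_sub _ _).trans (add_le_add ?_ ?_)
    · rw [abs_mul, abs_two]
      gcongr
    · rw [abs_pow]
      gcongr
  calc |m₂ x| ≤ 2 * (C₂ * log x * B) + B ^ 2 := hm₂
    _ ≤ 2 ^ (α + 1) * (C₂ * log x * B) + 2 ^ (2 * α) * B ^ 2 := by
      refine add_le_add (mul_le_mul_of_nonneg_right ?_ ((abs_nonneg _).trans hT))
        (le_mul_of_one_le_left (sq_nonneg _) (one_le_rpow one_le_two (by linarith)))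
      exact self_le_rpow_of_one_le one_le_two (by linarith)
    _ = _ := by
      simp only [B]
      rw [rpow_sub_one hL.ne', mul_comm 2 α, rpow_mul hL.le, rpow_two]
      field_simp

theorem m₂_bound_of_m_bounds (x₀ α C₁ C₂ : ℝ) (hx₀ : 1 < x₀) (hα : 0 < α)
    (hC₁ : 0 < C₁) (hC₂ : 0 < C₂)
    (h₁ : ∀ x : ℝ, x₀ ≤ x →
      |∑ n ∈ Finset.Icc 1 ⌊Real.sqrt x⌋₊, (moebius n : ℝ) / n| ≤ C₁ / Real.log x ^ α)
    (h₂ : ∀ x : ℝ, x₀ ≤ x →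
      ∑ n ∈ Finset.Icc 1 ⌊Real.sqrt x⌋₊, |(moebius n : ℝ)| / n ≤ C₂ * Real.log x) :
    ∀ x : ℝ, x₀ ≤ x →
      |m₂ x| ≤ (2 : ℝ) ^ (α + 1) * C₁ * C₂ / Real.log x ^ (α - 1) +
        (2 : ℝ) ^ (2 * α) * C₁ ^ 2 / Real.log x ^ (2 * α) :=
  m₂_bound_of_m_bounds_general x₀ α C₁ C₂ hx₀ hα hC₁ h₁ h₂
end

section
/- Let a > 1 and α > 0 be real numbers. For all x ≥ a, ∫_a^x dt/(log t)^α ≤ C_α · x/(log x)^α, where C_α = α^{−1} · ( α/(e·log a)^{α/(α+1)} + α^{1/(α+1)} )^{α+1}. -/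
/-!
Since `1 / log t ^ α` is decreasing, splitting `[a, x]` at `y = max a (x ^ θ)` gives
`∫ ≤ x ^ θ / log a ^ α + x / (θ log x) ^ α`. The bound `log x ≤ x ^ δ / (e δ)` with
`δ = (1 - θ) / α` turns the first term into `(α / (e (1 - θ) log a)) ^ α · x / log x ^ α`.
With `u = α / (e log a)` and `v = u ^ (α / (α + 1))`, the choice `θ = 1 / (1 + v)` balances the
two terms, and the total constant is `(1 + v) ^ (α + 1) = C_α`.
-/

open Real Set

namespace Real

lemma log_le_div_exp_one {y : ℝ} (hy : 0 < y) : log y ≤ y / exp 1 := by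
  have h := log_le_sub_one_of_pos (div_pos hy (exp_pos 1))
  rw [log_div hy.ne' (exp_pos 1).ne', log_exp] at h
  linarith

lemma log_le_rpow_div_exp_one_mul {x ε : ℝ} (hx : 0 < x) (hε : 0 < ε) :
    log x ≤ x ^ ε / (exp 1 * ε) := by
  have h := log_le_div_exp_one (rpow_pos_of_pos hx ε)
  rw [log_rpow hx] at h
  rw [← div_div, le_div_iff₀ hε]
  linarith

lemma log_rpow_le_mul_rpow {x α ε : ℝ} (hx : 1 ≤ x) (hα : 0 < α) (hε : 0 < ε) :
    log x ^ α ≤ (α / (exp 1 * ε)) ^ α * x ^ ε := by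
  have hx0 : 0 < x := by linarith
  have h : log x ≤ α / (exp 1 * ε) * x ^ (ε / α) := by
    convert log_le_rpow_div_exp_one_mul hx0 (div_pos hε hα) using 1
    field_simp
  calc log x ^ α ≤ (α / (exp 1 * ε) * x ^ (ε / α)) ^ α :=
        rpow_le_rpow (log_nonneg hx) h hα.le
    _ = (α / (exp 1 * ε)) ^ α * x ^ ε := by
        rw [mul_rpow (by positivity) (by positivity), ← rpow_mul hx0.le,
          div_mul_cancel₀ _ hα.ne']

lemma antitoneOn_one_div_log_rpow {α : ℝ} (hα : 0 ≤ α) :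
    AntitoneOn (fun t => 1 / log t ^ α) (Ioi 1) := fun _ hs _ _ hst =>
  one_div_le_one_div_of_le (rpow_pos_of_pos (log_pos hs) α)
    (rpow_le_rpow (log_pos hs).le (log_le_log (zero_lt_one.trans hs) hst) hα)

lemma div_rpow_div_add_one_rpow {u α : ℝ} (hu : 0 < u) (hα : 0 < α) :
    (u / u ^ (α / (α + 1))) ^ α = u ^ (α / (α + 1)) := by
  have hone : 1 - α / (α + 1) = 1 / (α + 1) := by field_simp; ring
  rw [← rpow_one_sub' hu.le (by rw [hone]; positivity), hone, ← rpow_mul hu.le,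
    one_div_mul_eq_div]

lemma div_one_sub_inv_rpow_add_inv_rpow_inv {u α : ℝ} (hu : 0 < u) (hα : 0 < α) :
    (u / (1 - (1 + u ^ (α / (α + 1)))⁻¹)) ^ α + (((1 + u ^ (α / (α + 1)))⁻¹) ^ α)⁻¹ =
      (1 + u ^ (α / (α + 1))) ^ (α + 1) := by
  have key := div_rpow_div_add_one_rpow hu hα
  set v := u ^ (α / (α + 1))
  have hv : 0 < v := rpow_pos_of_pos hu _
  have h : u / (1 - (1 + v)⁻¹) = u / v * (1 + v) := by
    rw [inv_eq_one_div, one_sub_div (by positivity), add_sub_cancel_left, div_div_eq_mul_div,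
      mul_div_right_comm]
  rw [h, mul_rpow (div_pos hu hv).le (by positivity), key, inv_rpow (by positivity), inv_inv,
    rpow_add (by positivity), rpow_one]
  ring

lemma inv_mul_div_rpow_add_rpow_rpow {c α : ℝ} (hc : 0 < c) (hα : 0 < α) :
    α⁻¹ * (α / c ^ (α / (α + 1)) + α ^ (1 / (α + 1))) ^ (α + 1) =
      (1 + (α / c) ^ (α / (α + 1))) ^ (α + 1) := by
  have hsum : 1 / (α + 1) + α / (α + 1) = 1 := by field_simp; ring
  have h : α / c ^ (α / (α + 1)) + α ^ (1 / (α + 1)) =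
      α ^ (1 / (α + 1)) * (1 + (α / c) ^ (α / (α + 1))) := by
    rw [mul_add, mul_one, div_rpow hα.le hc.le, ← mul_div_assoc, ← rpow_add hα, hsum, rpow_one,
      add_comm]
  rw [h, mul_rpow (by positivity) (by positivity), ← rpow_mul hα.le,
    one_div_mul_cancel (by positivity), rpow_one, ← mul_assoc, inv_mul_cancel₀ hα.ne', one_mul]

end Real

lemma AntitoneOn.intervalIntegral_le_sub_mul {f : ℝ → ℝ} {a b : ℝ} (hab : a ≤ b)
    (hf : AntitoneOn f (Icc a b)) : ∫ x in a..b, f x ≤ (b - a) * f a := by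
  have h := intervalIntegral.integral_mono_on hab
    (AntitoneOn.intervalIntegrable (by rwa [uIcc_of_le hab]))
    (intervalIntegrable_const (μ := MeasureTheory.volume))
    fun x hx => hf (left_mem_Icc.2 hab) hx hx.1
  simpa using h

lemma AntitoneOn.intervalIntegral_le_of_mem_Icc {f : ℝ → ℝ} {a y b : ℝ} (hy : y ∈ Icc a b)
    (hf : AntitoneOn f (Icc a b)) :
    ∫ x in a..b, f x ≤ (y - a) * f a + (b - y) * f y := by
  have hf₁ : AntitoneOn f (Icc a y) := hf.mono (Icc_subset_Icc le_rfl hy.2)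
  have hf₂ : AntitoneOn f (Icc y b) := hf.mono (Icc_subset_Icc hy.1 le_rfl)
  rw [← intervalIntegral.integral_add_adjacent_intervals
    (AntitoneOn.intervalIntegrable (by rwa [uIcc_of_le hy.1]))
    (AntitoneOn.intervalIntegrable (by rwa [uIcc_of_le hy.2]))]
  exact add_le_add (hf₁.intervalIntegral_le_sub_mul hy.1) (hf₂.intervalIntegral_le_sub_mul hy.2)

theorem integral_one_div_log_rpow_le_of_mem_Ioo {a x α θ : ℝ} (ha : 1 < a) (hax : a ≤ x)
    (hα : 0 < α) (hθ : θ ∈ Ioo 0 1) :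
    ∫ t in a..x, 1 / log t ^ α ≤
      ((α / (exp 1 * log a) / (1 - θ)) ^ α + (θ ^ α)⁻¹) * x / log x ^ α := by
  have hx : 1 < x := ha.trans_le hax
  have hx0 : 0 < x := by linarith
  have hlogx : 0 < log x ^ α := rpow_pos_of_pos (log_pos hx) α
  have hloga : 0 < log a ^ α := rpow_pos_of_pos (log_pos ha) α
  have hxθ : 0 < x ^ θ := rpow_pos_of_pos hx0 θ
  set y := max a (x ^ θ)
  have hy : y ∈ Icc a x := ⟨le_max_left _ _, max_le hax
    ((rpow_le_rpow_of_exponent_le hx.le hθ.2.le).trans_eq (rpow_one x))⟩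
  have hsplit := ((antitoneOn_one_div_log_rpow hα.le).mono
    fun t ht => ha.trans_le ht.1).intervalIntegral_le_of_mem_Icc hy
  have hfirst :
      (y - a) * (1 / log a ^ α) ≤ (α / (exp 1 * log a) / (1 - θ)) ^ α * x / log x ^ α := by
    have hya : y - a ≤ x ^ θ := sub_le_iff_le_add.2 (max_le (by linarith) (by linarith))
    have hK : log x ^ α * x ^ θ ≤ (α / (exp 1 * (1 - θ))) ^ α * x := by
      calc log x ^ α * x ^ θ ≤ (α / (exp 1 * (1 - θ))) ^ α * x ^ (1 - θ) * x ^ θ := by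
            gcongr; exact log_rpow_le_mul_rpow hx.le hα (sub_pos.2 hθ.2)
        _ = (α / (exp 1 * (1 - θ))) ^ α * x := by
            rw [mul_assoc, ← rpow_add hx0, sub_add_cancel, rpow_one]
    calc (y - a) * (1 / log a ^ α) ≤ x ^ θ * (1 / log a ^ α) := by gcongr
      _ = log x ^ α * x ^ θ / log x ^ α / log a ^ α := by field_simp
      _ ≤ (α / (exp 1 * (1 - θ))) ^ α * x / log x ^ α / log a ^ α := by gcongr
      _ = _ := by
        rw [show α / (exp 1 * log a) / (1 - θ) = α / (exp 1 * (1 - θ)) / log a by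
            rw [div_div, div_div, mul_right_comm],
          div_rpow (div_pos hα (mul_pos (exp_pos 1) (sub_pos.2 hθ.2))).le (log_pos ha).le]
        ring
  have hsecond : (x - y) * (1 / log y ^ α) ≤ (θ ^ α)⁻¹ * x / log x ^ α := by
    have hθlog : θ * log x ≤ log y := by
      rw [← log_rpow hx0]; exact log_le_log hxθ (le_max_right _ _)
    have hlogy : θ ^ α * log x ^ α ≤ log y ^ α := by
      rw [← mul_rpow hθ.1.le (log_pos hx).le]
      exact rpow_le_rpow (mul_pos hθ.1 (log_pos hx)).le hθlog hα.le
    have hθx : 0 < θ ^ α * log x ^ α := mul_pos (rpow_pos_of_pos hθ.1 α) hlogx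
    calc (x - y) * (1 / log y ^ α) ≤ x * (1 / (θ ^ α * log x ^ α)) :=
          mul_le_mul (by linarith [hy.1]) (one_div_le_one_div_of_le hθx hlogy)
            (one_div_pos.2 (hθx.trans_le hlogy)).le hx0.le
      _ = (θ ^ α)⁻¹ * x / log x ^ α := by ring
  calc _ ≤ _ := hsplit
    _ ≤ _ := add_le_add hfirst hsecond
    _ = _ := by ring

theorem integral_one_div_log_rpow_le (a α : ℝ) (ha : 1 < a) (hα : 0 < α) :
    ∀ x : ℝ, a ≤ x →
      (∫ t in a..x, 1 / Real.log t ^ α) ≤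
        (α⁻¹ * (α / (Real.exp 1 * Real.log a) ^ (α / (α + 1)) + α ^ (1 / (α + 1))) ^ (α + 1)) *
          x / Real.log x ^ α := by
  intro x hx
  have hc : 0 < exp 1 * log a := mul_pos (exp_pos 1) (log_pos ha)
  have hu : 0 < α / (exp 1 * log a) := div_pos hα hc
  have hθ : (1 + (α / (exp 1 * log a)) ^ (α / (α + 1)))⁻¹ ∈ Ioo 0 1 :=
    ⟨inv_pos.2 (by positivity), inv_lt_one_of_one_lt₀ (lt_add_of_pos_right _ (by positivity))⟩
  rw [inv_mul_div_rpow_add_rpow_rpow hc hα, ← div_one_sub_inv_rpow_add_inv_rpow_inv hu hα]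
  exact integral_one_div_log_rpow_le_of_mem_Ioo ha hx hα hθ
end

section
/- For every real number a > 2 there exists a constant C > 0 such that for all x ≥ 2, ∑_{m ≤ x, gcd(m, P(a)) = 1} a^{Ω(m)}/m ≤ C·(log x)^a, where P(a) denotes the product of all primes p ≤ a. -/
/-!
Rankin's trick: for `1 ≤ m ≤ x` and `s = 1 + 1 / log x` one has `1 / m ≤ e / m ^ s`, so the sum
is at most `e` times the Euler product `∏_{a < p ≤ x} (1 - a / p ^ s)⁻¹` of the completely
multiplicative weight `m ↦ a ^ Ω(m) / m ^ s`. As `a / p ≤ a / (⌊a⌋ + 1) < 1` for `p > a`, the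
logarithm of that product is `a ∑_p p ^ (-s) + O(∑_p p ^ (-2s))`, and comparing with the Euler
product of `ζ(s) ≤ s / (s - 1)` gives `∑_p p ^ (-s) ≤ log (s / (s - 1)) = log (1 + log x)`.
-/

open Finset ArithmeticFunction

namespace Real

lemma le_log_inv_one_sub {t : ℝ} (ht : t < 1) : t ≤ log (1 - t)⁻¹ := by
  simpa using one_sub_inv_le_log_of_pos (inv_pos.2 (sub_pos.2 ht))

lemma log_inv_one_sub_le {t θ : ℝ} (ht : t ≤ θ) (hθ : θ < 1) :
    log (1 - t)⁻¹ ≤ t + t ^ 2 / (1 - θ) := by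
  have ht₁ : 0 < 1 - t := by linarith
  calc log (1 - t)⁻¹ ≤ (1 - t)⁻¹ - 1 := log_le_sub_one_of_pos (inv_pos.2 ht₁)
    _ = t + t ^ 2 / (1 - t) := by field_simp; ring
    _ ≤ t + t ^ 2 / (1 - θ) := by gcongr

lemma tsum_nat_rpow_inv_le {s : ℝ} (hs : 1 < s) : ∑' n : ℕ, ((n : ℝ) ^ s)⁻¹ ≤ s / (s - 1) := by
  have hrem : 0 ≤ ZetaAsymptotics.termTSum s :=
    tsum_nonneg fun n => ZetaAsymptotics.term_nonneg _ _
  have hζ := ZetaAsymptotics.zeta_limit_aux1 hs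
  rw [(summable_nat_rpow_inv.2 hs).tsum_eq_zero_add]
  simp only [Nat.cast_zero, zero_rpow (by linarith : s ≠ 0), Nat.cast_add_one, ← one_div,
    div_zero, zero_add]
  have : s / (s - 1) = 1 + 1 / (s - 1) := by rw [one_add_div (by linarith), sub_add_cancel]
  nlinarith

end Real

-- The condition `m ≠ 0` is what makes it completely multiplicative, since `Ω 0 = 0`.
noncomputable def omegaWeight (Q : ℕ) (a s : ℝ) : ℕ →* ℝ where
  toFun m := if m ≠ 0 ∧ m.Coprime Q then a ^ cardFactors m / (m : ℝ) ^ s else 0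
  map_one' := by simp
  map_mul' m n := by
    by_cases hm : m ≠ 0 ∧ m.Coprime Q
    · by_cases hn : n ≠ 0 ∧ n.Coprime Q
      · rw [if_pos hm, if_pos hn, if_pos ⟨mul_ne_zero hm.1 hn.1, Nat.Coprime.mul_left hm.2 hn.2⟩,
          cardFactors_mul hm.1 hn.1, pow_add, Nat.cast_mul,
          Real.mul_rpow (Nat.cast_nonneg _) (Nat.cast_nonneg _), mul_div_mul_comm]
      · rw [if_neg hn, mul_zero, if_neg]
        exact fun hmn => hn ⟨right_ne_zero_of_mul hmn.1, Nat.Coprime.coprime_mul_left hmn.2⟩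
    · rw [if_neg hm, zero_mul, if_neg]
      exact fun hmn => hm ⟨left_ne_zero_of_mul hmn.1, Nat.Coprime.coprime_mul_right hmn.2⟩

lemma omegaWeight_apply (Q : ℕ) (a s : ℝ) (m : ℕ) :
    omegaWeight Q a s m = if m ≠ 0 ∧ m.Coprime Q then a ^ cardFactors m / (m : ℝ) ^ s else 0 :=
  rfl

lemma omegaWeight_nonneg (Q : ℕ) {a : ℝ} (ha : 0 ≤ a) (s : ℝ) (m : ℕ) :
    0 ≤ omegaWeight Q a s m := by
  rw [omegaWeight_apply]
  split_ifs <;> positivity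

lemma omegaWeight_one_one {s : ℝ} (hs : s ≠ 0) :
    ⇑(omegaWeight 1 1 s) = fun n : ℕ => ((n : ℝ) ^ s)⁻¹ := by
  ext n
  rcases eq_or_ne n 0 with rfl | hn
  · simp [omegaWeight_apply, Real.zero_rpow hs]
  · simp [omegaWeight_apply, hn]

lemma Nat.Prime.rpow_inv_lt_one {p : ℕ} (hp : p.Prime) {s : ℝ} (hs : 0 < s) : ((p : ℝ) ^ s)⁻¹ < 1 :=
  inv_lt_one_of_one_lt₀ (Real.one_lt_rpow (by exact_mod_cast hp.one_lt) hs)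

lemma prod_primesBelow_inv_one_sub_rpow_inv_le {s : ℝ} (hs : 1 < s) (N : ℕ) :
    ∏ p ∈ N.primesBelow, (1 - ((p : ℝ) ^ s)⁻¹)⁻¹ ≤ s / (s - 1) := by
  have hζ := omegaWeight_one_one (s := s) (by linarith)
  have hsum : Summable (omegaWeight 1 1 s) := hζ ▸ Real.summable_nat_rpow_inv.2 hs
  calc ∏ p ∈ N.primesBelow, (1 - ((p : ℝ) ^ s)⁻¹)⁻¹
      = ∏ p ∈ N.primesBelow, (1 - omegaWeight 1 1 s p)⁻¹ := by rw [hζ]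
    _ = ∑' m : N.smoothNumbers, omegaWeight 1 1 s m :=
      EulerProduct.prod_primesBelow_geometric_eq_tsum_smoothNumbers hsum N
    _ ≤ ∑' n, omegaWeight 1 1 s n := hsum.tsum_subtype_le _ _ (omegaWeight_nonneg 1 zero_le_one s)
    _ ≤ s / (s - 1) := by rw [hζ]; exact Real.tsum_nat_rpow_inv_le hs

lemma sum_primesBelow_rpow_inv_le_log {s : ℝ} (hs : 1 < s) (N : ℕ) :
    ∑ p ∈ N.primesBelow, ((p : ℝ) ^ s)⁻¹ ≤ Real.log (s / (s - 1)) := by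
  have hlt : ∀ p ∈ N.primesBelow, ((p : ℝ) ^ s)⁻¹ < 1 := fun p hp =>
    (Nat.prime_of_mem_primesBelow hp).rpow_inv_lt_one (by linarith)
  have hpos : ∀ p ∈ N.primesBelow, 0 < (1 - ((p : ℝ) ^ s)⁻¹)⁻¹ := fun p hp =>
    inv_pos.2 (sub_pos.2 (hlt p hp))
  calc ∑ p ∈ N.primesBelow, ((p : ℝ) ^ s)⁻¹
      ≤ ∑ p ∈ N.primesBelow, Real.log (1 - ((p : ℝ) ^ s)⁻¹)⁻¹ :=
        sum_le_sum fun p hp => Real.le_log_inv_one_sub (hlt p hp)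
    _ = Real.log (∏ p ∈ N.primesBelow, (1 - ((p : ℝ) ^ s)⁻¹)⁻¹) :=
        (Real.log_prod fun p hp => (hpos p hp).ne').symm
    _ ≤ Real.log (s / (s - 1)) :=
        Real.log_le_log (prod_pos hpos) (prod_primesBelow_inv_one_sub_rpow_inv_le hs N)

lemma prod_primesBelow_inv_one_sub_le {f : ℕ → ℝ} {c θ s : ℝ} (hc : 0 ≤ c) (hθ : θ < 1)
    (hs : 1 < s) (hf : ∀ p, p.Prime → 0 ≤ f p ∧ f p ≤ θ ∧ f p ≤ c * ((p : ℝ) ^ s)⁻¹) (N : ℕ) :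
    ∏ p ∈ N.primesBelow, (1 - f p)⁻¹ ≤ (s / (s - 1)) ^ c * 2 ^ (c ^ 2 / (1 - θ)) := by
  have hpos : ∀ p ∈ N.primesBelow, 0 < (1 - f p)⁻¹ := fun p hp =>
    inv_pos.2 (by linarith [(hf p (Nat.prime_of_mem_primesBelow hp)).2.1])
  have hterm : ∀ p ∈ N.primesBelow, Real.log (1 - f p)⁻¹ ≤
      c * ((p : ℝ) ^ s)⁻¹ + c ^ 2 / (1 - θ) * ((p : ℝ) ^ (2 * s))⁻¹ := by
    intro p hp
    obtain ⟨h₀, hθp, hcp⟩ := hf p (Nat.prime_of_mem_primesBelow hp)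
    have hsq : ((p : ℝ) ^ (2 * s))⁻¹ = (((p : ℝ) ^ s)⁻¹) ^ 2 := by
      rw [mul_comm, Real.rpow_mul (Nat.cast_nonneg p), Real.rpow_two, inv_pow]
    calc Real.log (1 - f p)⁻¹ ≤ f p + f p ^ 2 / (1 - θ) := Real.log_inv_one_sub_le hθp hθ
      _ ≤ c * ((p : ℝ) ^ s)⁻¹ + (c * ((p : ℝ) ^ s)⁻¹) ^ 2 / (1 - θ) := by
        gcongr
      _ = _ := by rw [hsq]; ring
  have hlog : Real.log (∏ p ∈ N.primesBelow, (1 - f p)⁻¹) ≤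
      c * Real.log (s / (s - 1)) + c ^ 2 / (1 - θ) * Real.log 2 := by
    have h2s : 2 * s / (2 * s - 1) ≤ 2 := by
      rw [div_le_iff₀ (by linarith)]; linarith
    rw [Real.log_prod fun p hp => (hpos p hp).ne']
    calc ∑ p ∈ N.primesBelow, Real.log (1 - f p)⁻¹
        ≤ ∑ p ∈ N.primesBelow,
            (c * ((p : ℝ) ^ s)⁻¹ + c ^ 2 / (1 - θ) * ((p : ℝ) ^ (2 * s))⁻¹) := sum_le_sum hterm
      _ = c * ∑ p ∈ N.primesBelow, ((p : ℝ) ^ s)⁻¹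
            + c ^ 2 / (1 - θ) * ∑ p ∈ N.primesBelow, ((p : ℝ) ^ (2 * s))⁻¹ := by
        rw [sum_add_distrib, mul_sum, mul_sum]
      _ ≤ c * Real.log (s / (s - 1)) + c ^ 2 / (1 - θ) * Real.log (2 * s / (2 * s - 1)) := by
        gcongr
        · exact sum_primesBelow_rpow_inv_le_log hs N
        · exact sum_primesBelow_rpow_inv_le_log (by linarith) N
      _ ≤ c * Real.log (s / (s - 1)) + c ^ 2 / (1 - θ) * Real.log 2 := by
        gcongr
        · exact div_pos (by linarith) (by linarith)
  have hs' : 0 < s / (s - 1) := div_pos (by linarith) (by linarith)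
  calc ∏ p ∈ N.primesBelow, (1 - f p)⁻¹
      = Real.exp (Real.log (∏ p ∈ N.primesBelow, (1 - f p)⁻¹)) :=
        (Real.exp_log (prod_pos hpos)).symm
    _ ≤ Real.exp (c * Real.log (s / (s - 1)) + c ^ 2 / (1 - θ) * Real.log 2) :=
        Real.exp_le_exp.2 hlog
    _ = (s / (s - 1)) ^ c * 2 ^ (c ^ 2 / (1 - θ)) := by
      rw [Real.exp_add, Real.rpow_def_of_pos hs', Real.rpow_def_of_pos two_pos, mul_comm c,
        mul_comm (c ^ 2 / (1 - θ))]

lemma sum_Icc_le_prod_primesBelow {f : ℕ →* ℝ} (hf : ∀ m, 0 ≤ f m) (hfp : ∀ p, p.Prime → f p < 1)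
    (n : ℕ) : ∑ m ∈ Icc 1 n, f m ≤ ∏ p ∈ (n + 1).primesBelow, (1 - f p)⁻¹ := by
  have hnorm : ∀ {p : ℕ}, p.Prime → ‖f p‖ < 1 := fun hp => by
    rw [Real.norm_of_nonneg (hf _)]; exact hfp _ hp
  have hsum := hasSum_subtype_iff_indicator.1
    (EulerProduct.summable_and_hasSum_smoothNumbers_prod_primesBelow_geometric hnorm (n + 1)).2
  calc ∑ m ∈ Icc 1 n, f m = ∑ m ∈ Icc 1 n, ((n + 1).smoothNumbers : Set ℕ).indicator f m :=
        sum_congr rfl fun m hm => (Set.indicator_of_mem (Nat.mem_smoothNumbers_of_lt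
          (mem_Icc.1 hm).1 (Nat.lt_succ_of_le (mem_Icc.1 hm).2)) _).symm
    _ ≤ _ := sum_le_hasSum _ (fun m _ => Set.indicator_apply_nonneg fun _ => hf m) hsum

lemma sum_Icc_div_le_exp_one_mul_sum_div_rpow {w : ℕ → ℝ} (hw : ∀ m, 0 ≤ w m) {x : ℝ}
    (hx : 1 < x) : ∑ m ∈ Icc 1 ⌊x⌋₊, w m / m ≤
      Real.exp 1 * ∑ m ∈ Icc 1 ⌊x⌋₊, w m / (m : ℝ) ^ (1 + (Real.log x)⁻¹) := by
  rw [mul_sum]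
  refine sum_le_sum fun m hm => ?_
  obtain ⟨hm₁, hmx⟩ := mem_Icc.1 hm
  have hm₀ : (0 : ℝ) < m := by exact_mod_cast hm₁
  have hmσ : (m : ℝ) ^ (Real.log x)⁻¹ ≤ Real.exp 1 := by
    rw [← Real.rpow_inv_log (by linarith) hx.ne']
    exact Real.rpow_le_rpow hm₀.le (Nat.le_floor_iff (by linarith) |>.1 hmx)
      (inv_nonneg.2 (Real.log_nonneg hx.le))
  rw [Real.rpow_add hm₀, Real.rpow_one, ← div_div, mul_div_assoc', le_div_iff₀ (by positivity),
    mul_comm]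
  exact mul_le_mul_of_nonneg_right hmσ (div_nonneg (hw m) hm₀.le)

lemma prod_filter_prime_Icc_eq_primorial (n : ℕ) :
    ∏ p ∈ (Icc 1 n).filter Nat.Prime, p = primorial n := by
  rw [primorial]
  congr 1
  ext p
  simp only [mem_filter, mem_Icc, mem_range]
  constructor
  · rintro ⟨⟨-, hpn⟩, hp⟩
    exact ⟨by omega, hp⟩
  · rintro ⟨hpn, hp⟩
    exact ⟨⟨hp.one_lt.le, by omega⟩, hp⟩

lemma omegaWeight_primorial_prime (n : ℕ) (a s : ℝ) {p : ℕ} (hp : p.Prime) :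
    omegaWeight (primorial n) a s p = if n < p then a / (p : ℝ) ^ s else 0 := by
  simp only [omegaWeight_apply, hp.coprime_iff_not_dvd, hp.dvd_primorial_iff, not_le,
    cardFactors_apply_prime hp, pow_one, ne_eq, hp.ne_zero, not_false_eq_true, true_and]

lemma omegaWeight_primorial_floor_prime_le {a s : ℝ} (ha : 0 ≤ a) (hs : 1 ≤ s) {p : ℕ}
    (hp : p.Prime) :
    0 ≤ omegaWeight (primorial ⌊a⌋₊) a s p ∧ omegaWeight (primorial ⌊a⌋₊) a s p ≤ a / (⌊a⌋₊ + 1) ∧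
      omegaWeight (primorial ⌊a⌋₊) a s p ≤ a * ((p : ℝ) ^ s)⁻¹ := by
  refine ⟨omegaWeight_nonneg _ ha s p, ?_⟩
  rw [omegaWeight_primorial_prime _ _ _ hp]
  split_ifs with hap
  · have hp₁ : (1 : ℝ) ≤ p := by exact_mod_cast hp.one_lt.le
    have hap' : (⌊a⌋₊ : ℝ) + 1 ≤ p := by exact_mod_cast hap
    refine ⟨?_, (div_eq_mul_inv _ _).le⟩
    calc a / (p : ℝ) ^ s ≤ a / p :=
          div_le_div_of_nonneg_left ha (by positivity) (Real.self_le_rpow_of_one_le hp₁ hs)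
      _ ≤ a / (⌊a⌋₊ + 1) := div_le_div_of_nonneg_left ha (by positivity) hap'
  · exact ⟨by positivity, by positivity⟩

lemma sum_coprime_primorial_le {a x : ℝ} (ha : 0 ≤ a) (hx : 1 < x) :
    ∑ m ∈ (Icc 1 ⌊x⌋₊).filter (fun m => m.Coprime (primorial ⌊a⌋₊)), a ^ cardFactors m / m ≤
      Real.exp 1 * 2 ^ (a ^ 2 / (1 - a / (⌊a⌋₊ + 1))) * (1 + Real.log x) ^ a := by
  have hθ : a / ((⌊a⌋₊ : ℝ) + 1) < 1 := (div_lt_one (by positivity)).2 (Nat.lt_floor_add_one a)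
  have hL : 0 < Real.log x := Real.log_pos hx
  set s := 1 + (Real.log x)⁻¹
  have hs : 1 < s := lt_add_of_pos_right 1 (inv_pos.2 hL)
  have hζ : s / (s - 1) = 1 + Real.log x := by
    simp only [s, add_sub_cancel_left, div_inv_eq_mul]; field_simp; ring
  set g := omegaWeight (primorial ⌊a⌋₊) a s
  have hg : ∀ p : ℕ, p.Prime → 0 ≤ g p ∧ g p ≤ a / (⌊a⌋₊ + 1) ∧ g p ≤ a * ((p : ℝ) ^ s)⁻¹ :=
    fun p hp => omegaWeight_primorial_floor_prime_le ha hs.le hp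
  rw [sum_filter]
  calc ∑ m ∈ Icc 1 ⌊x⌋₊, (if m.Coprime (primorial ⌊a⌋₊) then a ^ cardFactors m / m else 0)
      = ∑ m ∈ Icc 1 ⌊x⌋₊, (if m.Coprime (primorial ⌊a⌋₊) then a ^ cardFactors m else 0) / m := by
        simp only [ite_div, zero_div]
    _ ≤ Real.exp 1 * ∑ m ∈ Icc 1 ⌊x⌋₊, g m := by
        refine (sum_Icc_div_le_exp_one_mul_sum_div_rpow (fun m => by positivity) hx).trans_eq
          (congrArg _ (sum_congr rfl fun m hm => ?_))
        simp [g, omegaWeight_apply, ite_div, Nat.one_le_iff_ne_zero.1 (mem_Icc.1 hm).1, s]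
    _ ≤ Real.exp 1 * ∏ p ∈ (⌊x⌋₊ + 1).primesBelow, (1 - g p)⁻¹ := by
        gcongr
        exact sum_Icc_le_prod_primesBelow (omegaWeight_nonneg _ ha s)
          (fun p hp => (hg p hp).2.1.trans_lt hθ) _
    _ ≤ Real.exp 1 * ((1 + Real.log x) ^ a * 2 ^ (a ^ 2 / (1 - a / (⌊a⌋₊ + 1)))) := by
        rw [← hζ]
        gcongr
        exact prod_primesBelow_inv_one_sub_le ha hθ hs hg _
    _ = _ := by ring

theorem sum_coprime_primorial_bound (a : ℝ) (ha : 2 < a) :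
    ∃ C : ℝ, 0 < C ∧ ∀ x : ℝ, 2 ≤ x →
      ∑ m ∈ (Finset.Icc 1 ⌊x⌋₊).filter
          (fun m => Nat.Coprime m (∏ p ∈ (Finset.Icc 1 ⌊a⌋₊).filter Nat.Prime, p)),
          a ^ (cardFactors m) / m ≤ C * Real.log x ^ a := by
  have ha₀ : 0 ≤ a := by linarith
  have hlog2 : 0 < Real.log 2 := Real.log_pos one_lt_two
  refine ⟨Real.exp 1 * 2 ^ (a ^ 2 / (1 - a / (⌊a⌋₊ + 1))) * (1 + (Real.log 2)⁻¹) ^ a,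
    by positivity, fun x hx => ?_⟩
  have hL : Real.log 2 ≤ Real.log x := Real.log_le_log two_pos hx
  have hL₂ : 1 + Real.log x ≤ (1 + (Real.log 2)⁻¹) * Real.log x := by
    rw [add_mul, one_mul, add_comm, inv_mul_eq_div, add_le_add_iff_left, one_le_div₀ hlog2]
    exact hL
  rw [prod_filter_prime_Icc_eq_primorial, mul_assoc, ← Real.mul_rpow (by positivity) (by linarith)]
  refine (sum_coprime_primorial_le ha₀ (by linarith)).trans ?_
  gcongr
  linarith
end
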